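/- Let σ > 0. Consider the binary-input channel with uniform input X ∈ {0,1} whose output Y ∈ [−1,1) has conditional densities p(y|x) = f_{2ℤ,σ²}(y − x) (the ℤ/2ℤ, i.e. mod-2 BAWGN, channel). Then its mutual information I(X;Y) = ∑_{x∈{0,1}} (1/2) ∫_{−1}^{1} p(y|x) log₂[ p(y|x) / ((p(y|0)+p(y|1))/2) ] dy equals 1 + h(ℤ,σ²) − h(2ℤ,σ²); that is, C(ℤ/2ℤ, σ²) = C(2ℤ,σ²) − C(ℤ,σ²). -/

import Mathlib

/-! The density `f_ℤ` splits into its even and odd aliases, `f_ℤ(y) = f_{2ℤ}(y) + f_{2ℤ}(y + 1)`,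
so the output density `(p(y|0) + p(y|1))/2` is `f_ℤ(y)/2`, and by periodicity both inputs give
the same integral `∫_{-1}^{1} f_{2ℤ} log₂ (2 f_{2ℤ} / f_ℤ)`. Splitting the logarithm leaves
`-h(2ℤ,σ²)` plus `∫_{-1}^{1} f_{2ℤ} (1 - log₂ f_ℤ)`; since `1 - log₂ f_ℤ` is 1-periodic, the same
splitting folds this integral over a period of `f_{2ℤ}` onto one period of `f_ℤ`, where it equals
`1 + h(ℤ,σ²)` because a periodized density integrates to 1 over a period. -/

open Real

/-- The `vℤ`-aliased (wrapped) Gaussian density with noise variance `σ2`. -/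
noncomputable def aliasedGaussian (v σ2 : ℝ) (x : ℝ) : ℝ :=
  ∑' j : ℤ, (Real.sqrt (2 * Real.pi * σ2))⁻¹ * Real.exp (-(x + v * (j : ℝ)) ^ 2 / (2 * σ2))

/-- The differential entropy (in bits) of the `vℤ`-aliased Gaussian noise. -/
noncomputable def aliasedEntropy (v σ2 : ℝ) : ℝ :=
  -∫ x in (-v / 2)..(v / 2), aliasedGaussian v σ2 x * Real.logb 2 (aliasedGaussian v σ2 x)

open MeasureTheory Function intervalIntegral

theorem HasSum.int_even_add_odd {M : Type*} [AddCommMonoid M] [TopologicalSpace M]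
    [ContinuousAdd M] {f : ℤ → M} {a b : M} (he : HasSum (fun k => f (2 * k)) a)
    (ho : HasSum (fun k => f (2 * k + 1)) b) : HasSum f (a + b) := by
  have := mul_right_injective₀ (two_ne_zero' ℤ)
  replace ho := ((add_left_injective 1).comp this).hasSum_range_iff.2 ho
  refine (this.hasSum_range_iff.2 he).add_isCompl ?_ ho
  simpa [Function.comp_def] using Int.isCompl_even_odd

noncomputable def periodization (φ : ℝ → ℝ) (v x : ℝ) : ℝ := ∑' j : ℤ, φ (x + v * j)

theorem periodization_periodic (φ : ℝ → ℝ) (v : ℝ) : Periodic (periodization φ v) v := by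
  intro x
  rw [periodization, periodization,
    ← (Equiv.addRight (1 : ℤ)).tsum_eq (fun j : ℤ => φ (x + v * j))]
  congr 1 with j
  simp only [Equiv.coe_addRight, Int.cast_add, Int.cast_one]
  congr 1
  ring

theorem periodization_eq_add {φ : ℝ → ℝ} {v x : ℝ} (h : Summable fun j : ℤ => φ (x + v * j)) :
    periodization φ v x = periodization φ (2 * v) x + periodization φ (2 * v) (x + v) := by
  have hinj := mul_right_injective₀ (two_ne_zero' ℤ)
  have heven : HasSum (fun j : ℤ => φ (x + v * ↑(2 * j))) (periodization φ (2 * v) x) := by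
    rw [periodization, tsum_congr fun j : ℤ => by
      rw [show x + 2 * v * j = x + v * ↑(2 * j) by push_cast; ring]]
    exact (h.comp_injective hinj).hasSum
  have hodd :
      HasSum (fun j : ℤ => φ (x + v * ↑(2 * j + 1))) (periodization φ (2 * v) (x + v)) := by
    rw [periodization, tsum_congr fun j : ℤ => by
      rw [show x + v + 2 * v * j = x + v * ↑(2 * j + 1) by push_cast; ring]]
    exact (h.comp_injective ((add_left_injective 1).comp hinj)).hasSum
  exact (HasSum.int_even_add_odd (f := fun j : ℤ => φ (x + v * j)) heven hodd).tsum_eq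

theorem periodization_pos {φ : ℝ → ℝ} {v x : ℝ} (hφ : ∀ y, 0 < φ y)
    (h : Summable fun j : ℤ => φ (x + v * j)) : 0 < periodization φ v x :=
  h.tsum_pos (fun _ => (hφ _).le) 0 (hφ _)

theorem hasSum_setIntegral_comp_add_mul_int {E : Type*} [NormedAddCommGroup E]
    [NormedSpace ℝ E] {φ : ℝ → E} (hφ : Integrable φ) {v : ℝ} (hv : 0 < v) (t : ℝ) :
    HasSum (fun j : ℤ => ∫ x in Set.Ioc t (t + v), φ (x + v * j)) (∫ x, φ x) := by
  have := hasSum_integral_iUnion (fun _ => measurableSet_Ioc)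
    (Set.pairwise_disjoint_Ioc_add_zsmul t v) (f := φ) (μ := volume)
    (by rw [iUnion_Ioc_add_zsmul hv t]; exact hφ.integrableOn)
  rw [iUnion_Ioc_add_zsmul hv t, setIntegral_univ] at this
  convert this using 2 with j
  rw [add_smul, one_smul, zsmul_eq_mul, ← integral_of_le (by linarith),
    ← integral_of_le (by linarith), integral_comp_add_right]
  congr 1 <;> ring

theorem integral_periodization {φ : ℝ → ℝ} (hφ : Integrable φ) {v : ℝ} (hv : 0 < v)
    (t : ℝ) : ∫ x in t..t + v, periodization φ v x = ∫ x, φ x := by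
  rw [integral_of_le (by linarith), ← (hasSum_setIntegral_comp_add_mul_int hφ hv t).tsum_eq]
  refine (integral_tsum_of_summable_integral_norm (fun j => ?_) ?_).symm
  · exact (hφ.comp_add_right _).integrableOn
  · exact (hasSum_setIntegral_comp_add_mul_int hφ.norm hv t).summable

theorem integral_add_two_mul_eq_integral_add_comp_add {g : ℝ → ℝ} (hg : Continuous g)
    (a T : ℝ) :
    ∫ y in a..a + 2 * T, g y = ∫ y in a..a + T, (g y + g (y + T)) := by
  rw [intervalIntegral.integral_add (hg.intervalIntegrable _ _)
    ((hg.comp (continuous_add_const T)).intervalIntegrable (u := fun y => g (y + T)) _ _),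
    integral_comp_add_right, ← integral_add_adjacent_intervals (hg.intervalIntegrable a (a + T))
    (hg.intervalIntegrable _ _)]
  ring_nf

open ProbabilityTheory
open scoped NNReal

theorem aliasedGaussian_eq_periodization {σ2 : ℝ} (hσ2 : 0 ≤ σ2) (v : ℝ) :
    aliasedGaussian v σ2 = periodization (gaussianPDFReal 0 σ2.toNNReal) v := by
  ext x
  simp [aliasedGaussian, periodization, gaussianPDFReal, Real.coe_toNNReal _ hσ2]

theorem exists_summable_bound_gaussianPDFReal_add_mul_int {s : ℝ≥0} (hs : s ≠ 0) {v : ℝ}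
    (hv : v ≠ 0) (R : ℝ) : ∃ u : ℤ → ℝ, Summable u ∧
      ∀ (n : ℤ) (x : ℝ), |x| ≤ R → gaussianPDFReal 0 s (x + v * n) ≤ u n := by
  have hs' : (0 : ℝ) < s := NNReal.coe_pos.2 (pos_iff_ne_zero.2 hs)
  -- `|x| ≤ R` gives `(x + v n)² ≥ v² n² - 2 R |v| |n|`: the majorant of the Jacobi theta series
  -- in `summable_pow_mul_jacobiTheta₂_term_bound`.
  set T := v ^ 2 / (2 * π * s)
  set S := R * |v| / (2 * π * s)
  refine ⟨fun n => (√(2 * π * s))⁻¹ * rexp (-π * (T * n ^ 2 - 2 * S * |n|)), ?_, ?_⟩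
  · simpa using (summable_pow_mul_jacobiTheta₂_term_bound S (by positivity : 0 < T) 0).mul_left
      (√(2 * π * s))⁻¹
  intro n x hx
  rw [gaussianPDFReal, sub_zero]
  dsimp only
  gcongr
  have hcross : |x * v * n| ≤ R * |v| * |(n : ℝ)| := by
    rw [abs_mul, abs_mul]
    gcongr
  simp only [T, S]
  field_simp
  push_cast
  nlinarith [sq_nonneg x, neg_abs_le (x * v * n)]

theorem summable_gaussianPDFReal_add_mul_int {s : ℝ≥0} (hs : s ≠ 0) {v : ℝ} (hv : v ≠ 0)
    (x : ℝ) : Summable fun n : ℤ => gaussianPDFReal 0 s (x + v * n) :=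
  have ⟨_, hu, hle⟩ := exists_summable_bound_gaussianPDFReal_add_mul_int hs hv |x|
  hu.of_nonneg_of_le (fun _ => gaussianPDFReal_nonneg _ _ _) (hle · x le_rfl)

theorem continuous_periodization_gaussianPDFReal {s : ℝ≥0} (hs : s ≠ 0) {v : ℝ} (hv : v ≠ 0) :
    Continuous (periodization (gaussianPDFReal 0 s) v) := by
  refine continuous_iff_continuousAt.2 fun x₀ => ?_
  obtain ⟨u, hu, hle⟩ := exists_summable_bound_gaussianPDFReal_add_mul_int hs hv (|x₀| + 1)
  have hx₀ : x₀ ∈ Set.Ioo (-(|x₀| + 1)) (|x₀| + 1) := abs_lt.1 (lt_add_one _)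
  refine (continuousOn_tsum (fun n => ?_) hu fun n x hx => ?_).continuousAt
    (Ioo_mem_nhds hx₀.1 hx₀.2)
  · simp only [gaussianPDFReal]
    fun_prop
  · rw [Real.norm_of_nonneg (gaussianPDFReal_nonneg _ _ _)]
    exact hle n x (abs_lt.2 hx).le

theorem aliasedGaussian_periodic (v σ2 : ℝ) : Periodic (aliasedGaussian v σ2) v :=
  periodization_periodic (fun y => (√(2 * π * σ2))⁻¹ * rexp (-y ^ 2 / (2 * σ2))) v

section AliasedGaussian

variable {σ2 : ℝ}

theorem aliasedGaussian_pos (hσ2 : 0 < σ2) {v : ℝ} (hv : v ≠ 0) (x : ℝ) :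
    0 < aliasedGaussian v σ2 x := by
  have hs : σ2.toNNReal ≠ 0 := by simpa using hσ2
  rw [aliasedGaussian_eq_periodization hσ2.le]
  exact periodization_pos (gaussianPDFReal_pos 0 _ · hs)
    (summable_gaussianPDFReal_add_mul_int hs hv x)

theorem continuous_aliasedGaussian (hσ2 : 0 < σ2) {v : ℝ} (hv : v ≠ 0) :
    Continuous (aliasedGaussian v σ2) := by
  rw [aliasedGaussian_eq_periodization hσ2.le]
  exact continuous_periodization_gaussianPDFReal (by simpa using hσ2) hv

theorem aliasedGaussian_eq_add (hσ2 : 0 < σ2) {v : ℝ} (hv : v ≠ 0) (x : ℝ) :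
    aliasedGaussian v σ2 x =
      aliasedGaussian (2 * v) σ2 x + aliasedGaussian (2 * v) σ2 (x + v) := by
  simp only [aliasedGaussian_eq_periodization hσ2.le]
  exact periodization_eq_add (summable_gaussianPDFReal_add_mul_int (by simpa using hσ2) hv x)

theorem integral_aliasedGaussian (hσ2 : 0 < σ2) {v : ℝ} (hv : 0 < v) :
    ∫ x in -v / 2..v / 2, aliasedGaussian v σ2 x = 1 := by
  rw [aliasedGaussian_eq_periodization hσ2.le, show v / 2 = -v / 2 + v by ring,
    integral_periodization (integrable_gaussianPDFReal 0 _) hv,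
    integral_gaussianPDFReal_eq_one 0 (by simpa using hσ2)]

theorem integral_aliasedGaussian_two_mul_mul (hσ2 : 0 < σ2) {v : ℝ} (hv : v ≠ 0) {w : ℝ → ℝ}
    (hw : Continuous w) (hwv : Periodic w v) (a : ℝ) :
    ∫ y in a..a + 2 * v, aliasedGaussian (2 * v) σ2 y * w y =
      ∫ y in a..a + v, aliasedGaussian v σ2 y * w y := by
  have hc := continuous_aliasedGaussian hσ2 (mul_ne_zero two_ne_zero hv)
  rw [integral_add_two_mul_eq_integral_add_comp_add
    (g := fun y => aliasedGaussian (2 * v) σ2 y * w y) (hc.mul hw)]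
  refine integral_congr fun y _ => ?_
  rw [hwv y, aliasedGaussian_eq_add hσ2 hv y]
  ring

theorem integral_mod2_channel_term (hσ2 : 0 < σ2) (n : ℤ) :
    ∫ y in (-1 : ℝ)..1, aliasedGaussian 2 σ2 (y - n) *
        logb 2 (aliasedGaussian 2 σ2 (y - n) /
          ((aliasedGaussian 2 σ2 (y - 0) + aliasedGaussian 2 σ2 (y - 1)) / 2)) =
      ∫ y in (-1 : ℝ)..1, aliasedGaussian 2 σ2 y *
        logb 2 (aliasedGaussian 2 σ2 y / (aliasedGaussian 1 σ2 y / 2)) := by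
  set G : ℝ → ℝ := fun y =>
    aliasedGaussian 2 σ2 y * logb 2 (aliasedGaussian 2 σ2 y / (aliasedGaussian 1 σ2 y / 2))
  have hper₁ := aliasedGaussian_periodic 1 σ2
  have hper₂ := aliasedGaussian_periodic 2 σ2
  have hG : Periodic G 2 := by
    intro y
    simp only [G]
    rw [hper₂ y, show y + 2 = y + 1 + 1 by ring, hper₁, hper₁]
  have hden (y : ℝ) : aliasedGaussian 2 σ2 (y - 0) + aliasedGaussian 2 σ2 (y - 1) =
      aliasedGaussian 1 σ2 (y - n) := by
    have hsplit := aliasedGaussian_eq_add hσ2 one_ne_zero y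
    rw [mul_one] at hsplit
    rw [sub_zero, show y - 1 = y + 1 - 2 by ring, hper₂.sub_eq, ← hsplit,
      ← hper₁.sub_int_mul_eq n, mul_one]
  calc _ = ∫ y in (-1 : ℝ)..1, G (y - n) := by simp only [G, hden]
    _ = ∫ y in (-1 : ℝ)..1, G y := by
      rw [integral_comp_sub_right, show (1 : ℝ) - n = -1 - n + 2 by ring,
        hG.intervalIntegral_add_eq (-1 - n) (-1)]
      norm_num

theorem integral_aliasedGaussian_mul_one_sub_logb (hσ2 : 0 < σ2) :
    ∫ y in (-1 : ℝ)..1, aliasedGaussian 2 σ2 y * (1 - logb 2 (aliasedGaussian 1 σ2 y)) =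
      1 + aliasedEntropy 1 σ2 := by
  have hpos₁ := aliasedGaussian_pos hσ2 one_ne_zero
  have hc₁ := continuous_aliasedGaussian hσ2 one_ne_zero
  have hlogc₁ : Continuous fun y => logb 2 (aliasedGaussian 1 σ2 y) :=
    hc₁.logb fun y => (hpos₁ y).ne'
  have hper₁ := aliasedGaussian_periodic 1 σ2
  set w : ℝ → ℝ := fun y => 1 - logb 2 (aliasedGaussian 1 σ2 y)
  have hwper : Periodic w 1 := fun y => by simp only [w, hper₁ y]
  have hprod : Periodic (fun y => aliasedGaussian 2 σ2 y * w y) 2 :=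
    (aliasedGaussian_periodic 2 σ2).mul (by simpa using hwper.nat_mul 2)
  change ∫ y in (-1 : ℝ)..1, aliasedGaussian 2 σ2 y * w y = _
  calc _ = ∫ y in (-1 / 2 : ℝ)..-1 / 2 + 2 * 1, aliasedGaussian (2 * 1) σ2 y * w y := by
        rw [mul_one, ← hprod.intervalIntegral_add_eq (-1)]
        norm_num
    _ = ∫ y in (-1 / 2 : ℝ)..-1 / 2 + 1, aliasedGaussian 1 σ2 y * w y :=
        integral_aliasedGaussian_two_mul_mul hσ2 one_ne_zero (continuous_const.fun_sub hlogc₁)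
          hwper _
    _ = 1 + aliasedEntropy 1 σ2 := by
        simp only [w, mul_sub, mul_one]
        rw [intervalIntegral.integral_sub (hc₁.intervalIntegrable _ _)
          ((hc₁.fun_mul hlogc₁).intervalIntegrable _ _)]
        have hnorm := integral_aliasedGaussian hσ2 one_pos
        norm_num [aliasedEntropy] at hnorm ⊢
        linarith

theorem integral_aliasedGaussian_mul_logb_div (hσ2 : 0 < σ2) :
    ∫ y in (-1 : ℝ)..1, aliasedGaussian 2 σ2 y *
        logb 2 (aliasedGaussian 2 σ2 y / (aliasedGaussian 1 σ2 y / 2)) =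
      1 + aliasedEntropy 1 σ2 - aliasedEntropy 2 σ2 := by
  have hpos₁ := aliasedGaussian_pos hσ2 one_ne_zero
  have hpos₂ := aliasedGaussian_pos hσ2 two_ne_zero
  have hc₂ := continuous_aliasedGaussian hσ2 two_ne_zero
  have hlogc₁ : Continuous fun y => logb 2 (aliasedGaussian 1 σ2 y) :=
    (continuous_aliasedGaussian hσ2 one_ne_zero).logb fun y => (hpos₁ y).ne'
  have hlogc₂ : Continuous fun y => logb 2 (aliasedGaussian 2 σ2 y) :=
    hc₂.logb fun y => (hpos₂ y).ne'
  have hlogb (y : ℝ) : aliasedGaussian 2 σ2 y *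
      logb 2 (aliasedGaussian 2 σ2 y / (aliasedGaussian 1 σ2 y / 2)) =
      aliasedGaussian 2 σ2 y * logb 2 (aliasedGaussian 2 σ2 y) +
        aliasedGaussian 2 σ2 y * (1 - logb 2 (aliasedGaussian 1 σ2 y)) := by
    rw [logb_div (hpos₂ y).ne' (div_pos (hpos₁ y) two_pos).ne', logb_div (hpos₁ y).ne' two_ne_zero,
      logb_self_eq_one one_lt_two]
    ring
  rw [integral_congr fun y _ => hlogb y, intervalIntegral.integral_add
    ((hc₂.fun_mul hlogc₂).intervalIntegrable _ _)
    ((hc₂.fun_mul (continuous_const.fun_sub hlogc₁)).intervalIntegrable _ _),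
    integral_aliasedGaussian_mul_one_sub_logb hσ2]
  norm_num [aliasedEntropy]
  ring

end AliasedGaussian

/-- the mutual information of the ℤ/2ℤ (mod-2 BAWGN) channel with
uniform binary input, transition densities `p(y|x) = f_{2ℤ,σ²}(y − x)` for
`x ∈ {0,1}`, equals `1 + h(ℤ,σ²) − h(2ℤ,σ²)`,
i.e. `C(ℤ/2ℤ,σ²) = C(2ℤ,σ²) − C(ℤ,σ²)`. -/
theorem mod2_channel_capacity (σ : ℝ) (hσ : 0 < σ) :
    (∑ x ∈ ({0, 1} : Finset ℝ), (1 / 2 : ℝ) *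
        ∫ y in (-1 : ℝ)..1,
          aliasedGaussian 2 (σ ^ 2) (y - x) *
            Real.logb 2 (aliasedGaussian 2 (σ ^ 2) (y - x) /
              ((aliasedGaussian 2 (σ ^ 2) (y - 0) + aliasedGaussian 2 (σ ^ 2) (y - 1)) / 2)))
      = 1 + aliasedEntropy 1 (σ ^ 2) - aliasedEntropy 2 (σ ^ 2) := by
  have hσ2 : 0 < σ ^ 2 := by positivity
  have h₀ := integral_mod2_channel_term hσ2 0
  have h₁ := integral_mod2_channel_term hσ2 1
  push_cast at h₀ h₁
  rw [Finset.sum_pair zero_ne_one, h₀, h₁, integral_aliasedGaussian_mul_logb_div hσ2]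
  ring
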